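/- arXiv:0901.0566 — 6 statements merged into one kernel-verified Lean document; each statement's English description precedes it below -/
import Mathlib

section
/- Let u be a nonempty word of length m in an alphabet X with |X| = r > 1, and let N(u) be the set of words in the free monoid W(X) that do not contain u as a (contiguous) subword. Then there exist constants C > 0 and ε > 0 such that the number of words in N(u) of length at most n is at most C(r - ε)^n for all n ≥ 1. In particular one may take C = r^{m-1} and r - ε = (r^m - 1)^{1/m}. -/
/-!
Cut a word of length `q m + s` avoiding `u` (with `m = |u|`) into `q` blocks of length `m`
followed by a tail of length `s`: no block equals `u`, so there are at most
`(r^m - 1)^q r^s` such words. Hence the words of length `n` avoiding `u` number at most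
`r^(m-1) θⁿ` with `θ = (r^m - 1)^(1/m) < r`, and summing over the lengths `k ≤ n` is absorbed
by passing to any growth rate `ρ ∈ (θ, r)`, since `∑_{k ≤ n} ρ^k ≤ ρ/(ρ-1) · ρⁿ`.
-/

open Set Finset

section Avoiders

variable {α : Type*}

def avoidersOfLength (u : List α) (n : ℕ) : Set (List α) :=
  {w | w.length = n ∧ ¬ u <:+: w}

lemma List.ncard_setOf_length_eq [Fintype α] (n : ℕ) :
    {w : List α | w.length = n}.ncard = Fintype.card α ^ n := by
  have e : {w : List α | w.length = n} ≃ List.Vector α n :=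
    Equiv.subtypeEquivRight fun _ => .rfl
  rw [← Nat.card_coe_set_eq, Nat.card_congr e, Nat.card_eq_fintype_card, card_vector]

lemma avoidersOfLength_finite [Finite α] (u : List α) (n : ℕ) :
    (avoidersOfLength u n).Finite :=
  (List.finite_length_eq α n).subset fun _ hw => hw.1

lemma ncard_avoidersOfLength_le_pow [Fintype α] (u : List α) (n : ℕ) :
    (avoidersOfLength u n).ncard ≤ Fintype.card α ^ n := by
  rw [← List.ncard_setOf_length_eq n]
  exact ncard_le_ncard (fun _ hw => hw.1) (List.finite_length_eq α n)

lemma ncard_avoidersOfLength_length_add_le [Fintype α] (u : List α) (n : ℕ) :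
    (avoidersOfLength u (u.length + n)).ncard ≤
      (Fintype.card α ^ u.length - 1) * (avoidersOfLength u n).ncard := by
  set m := u.length
  have hsplit : (avoidersOfLength u (m + n)).ncard ≤
      (({v : List α | v.length = m} \ {u}) ×ˢ avoidersOfLength u n).ncard := by
    refine ncard_le_ncard_of_injOn (fun w => (w.take m, w.drop m)) ?_ ?_
      ((List.finite_length_eq α m).sdiff.prod (avoidersOfLength_finite u n))
    · rintro w ⟨hlen, havoid⟩
      refine ⟨⟨by simp [hlen], fun hu => havoid ?_⟩, by simp [hlen], fun hinf => havoid ?_⟩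
      · exact (mem_singleton_iff.mp hu) ▸ (w.take_prefix m).isInfix
      · exact hinf.trans (w.drop_suffix m).isInfix
    · intro a _ b _ h
      simpa using congrArg (fun p : List α × List α => p.1 ++ p.2) h
  rwa [ncard_prod, ncard_sdiff_singleton_of_mem (by simp [m]),
    List.ncard_setOf_length_eq] at hsplit

lemma ncard_avoidersOfLength_length_mul_add_le [Fintype α] (u : List α) (q s : ℕ) :
    (avoidersOfLength u (u.length * q + s)).ncard ≤
      (Fintype.card α ^ u.length - 1) ^ q * Fintype.card α ^ s := by
  induction q with
  | zero => simpa using ncard_avoidersOfLength_le_pow u s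
  | succ q ih =>
    calc (avoidersOfLength u (u.length * (q + 1) + s)).ncard
        = (avoidersOfLength u (u.length + (u.length * q + s))).ncard := by ring_nf
      _ ≤ (Fintype.card α ^ u.length - 1) * (avoidersOfLength u (u.length * q + s)).ncard :=
          ncard_avoidersOfLength_length_add_le u _
      _ ≤ (Fintype.card α ^ u.length - 1) ^ (q + 1) * Fintype.card α ^ s := by
          rw [pow_succ', mul_assoc]
          exact Nat.mul_le_mul_left _ ih

lemma pow_div_mul_pow_mod_le_rpow {q r : ℝ} (hq : 1 ≤ q) (hr : 1 ≤ r) {m : ℕ} (hm : 0 < m)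
    (n : ℕ) : q ^ (n / m) * r ^ (n % m) ≤ r ^ (m - 1) * (q ^ ((1 : ℝ) / m)) ^ n := by
  have hquot : q ^ (n / m) ≤ (q ^ ((1 : ℝ) / m)) ^ n := by
    rw [← Real.rpow_natCast, ← Real.rpow_natCast, ← Real.rpow_mul (by linarith),
      one_div_mul_eq_div]
    exact Real.rpow_le_rpow_of_exponent_le hq Nat.cast_div_le
  have hrem : r ^ (n % m) ≤ r ^ (m - 1) :=
    pow_le_pow_right₀ hr (Nat.le_sub_one_of_lt (Nat.mod_lt n hm))
  rw [mul_comm]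
  exact mul_le_mul hrem hquot (by positivity) (by positivity)

lemma ncard_avoidersOfLength_le_rpow [Fintype α] (hα : 1 < Fintype.card α) {u : List α}
    (hu : u ≠ []) (n : ℕ) :
    ((avoidersOfLength u n).ncard : ℝ) ≤ (Fintype.card α : ℝ) ^ (u.length - 1) *
      (((Fintype.card α : ℝ) ^ u.length - 1) ^ ((1 : ℝ) / u.length)) ^ n := by
  set m := u.length
  set c := Fintype.card α
  have hm : 0 < m := List.length_pos_iff.mpr hu
  have hcm : 2 ≤ c ^ m := hα.trans_le (Nat.le_self_pow hm.ne' c)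
  have hq : ((c ^ m - 1 : ℕ) : ℝ) = (c : ℝ) ^ m - 1 := by
    rw [Nat.cast_sub (by omega), Nat.cast_pow, Nat.cast_one]
  have hnat := ncard_avoidersOfLength_length_mul_add_le u (n / m) (n % m)
  rw [Nat.div_add_mod] at hnat
  calc ((avoidersOfLength u n).ncard : ℝ)
      ≤ (((c ^ m - 1) ^ (n / m) * c ^ (n % m) : ℕ) : ℝ) := Nat.cast_le.mpr hnat
    _ = ((c : ℝ) ^ m - 1) ^ (n / m) * (c : ℝ) ^ (n % m) := by
        rw [Nat.cast_mul, Nat.cast_pow, Nat.cast_pow, hq]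
    _ ≤ _ :=
        pow_div_mul_pow_mod_le_rpow (by rw [← hq]; exact_mod_cast (by omega : 1 ≤ c ^ m - 1))
          (by exact_mod_cast hα.le) hm n

lemma ncard_setOf_length_le_avoiding_le_sum (u : List α) (n : ℕ) :
    {w : List α | w.length ≤ n ∧ ¬ u <:+: w}.ncard ≤
      ∑ k ∈ range (n + 1), (avoidersOfLength u k).ncard := by
  have hunion : {w : List α | w.length ≤ n ∧ ¬ u <:+: w} =
      ⋃ k ∈ range (n + 1), avoidersOfLength u k := by
    ext w
    simp [avoidersOfLength]
  rw [hunion]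
  exact set_ncard_biUnion_le _ _

end Avoiders

lemma sum_range_succ_pow_le {ρ : ℝ} (hρ : 1 < ρ) (n : ℕ) :
    ∑ k ∈ range (n + 1), ρ ^ k ≤ ρ / (ρ - 1) * ρ ^ n := by
  have hρ1 : 0 < ρ - 1 := by linarith
  rw [div_mul_eq_mul_div, le_div_iff₀ hρ1, geom_sum_mul, ← pow_succ']
  linarith

lemma pow_sub_one_rpow_one_div_mem_Ico {r : ℝ} (hr : 2 ≤ r) {m : ℕ} (hm : 0 < m) :
    (r ^ m - 1) ^ ((1 : ℝ) / m) ∈ Ico 1 r := by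
  have hrm : 2 ≤ r ^ m := hr.trans (le_self_pow₀ (by linarith) hm.ne')
  refine ⟨Real.one_le_rpow (by linarith) (by positivity), ?_⟩
  calc (r ^ m - 1) ^ ((1 : ℝ) / m) < (r ^ m) ^ ((1 : ℝ) / m) :=
        Real.rpow_lt_rpow (by linarith) (by linarith) (by positivity)
    _ = r := by rw [one_div, Real.pow_rpow_inv_natCast (by linarith) hm.ne']

/-- Avoiding a fixed nonempty subword forces exponentially smaller growth: if `u` is a
nonempty word of length `m` over an alphabet of size `r > 1`, then the number of words of
length at most `n` avoiding `u` as a contiguous subword is at most `C(r-ε)ⁿ` for some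
`C, ε > 0`; in particular, counting words of a given length, one may take `C = r^(m-1)`
and `r - ε = (r^m - 1)^(1/m)`. -/
theorem subword_avoiding_count (r : ℕ) (hr : 1 < r) (u : List (Fin r)) (hu : u ≠ [])
    (m : ℕ) (hm : m = u.length) :
    (∃ C ε : ℝ, 0 < C ∧ 0 < ε ∧ ε < r ∧ ∀ n : ℕ, 1 ≤ n →
      ({w : List (Fin r) | w.length ≤ n ∧ ¬ u <:+: w}.ncard : ℝ) ≤ C * ((r : ℝ) - ε) ^ n) ∧
    (∀ n : ℕ, 1 ≤ n →
      ({w : List (Fin r) | w.length = n ∧ ¬ u <:+: w}.ncard : ℝ)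
        ≤ (r : ℝ) ^ (m - 1) * (((r : ℝ) ^ m - 1) ^ ((1 : ℝ) / m)) ^ n) := by
  subst hm
  have hcard : 1 < Fintype.card (Fin r) := by simpa using hr
  have hlength := ncard_avoidersOfLength_le_rpow hcard hu
  simp only [Fintype.card_fin] at hlength
  refine ⟨?_, fun n _ => hlength n⟩
  set θ := ((r : ℝ) ^ u.length - 1) ^ ((1 : ℝ) / u.length)
  have hr2 : (2 : ℝ) ≤ r := by exact_mod_cast hr
  obtain ⟨hθ1, hθr⟩ : θ ∈ Ico 1 (r : ℝ) :=
    pow_sub_one_rpow_one_div_mem_Ico hr2 (List.length_pos_iff.mpr hu)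
  set ρ := (θ + r) / 2 with hρ_def
  have hρ : 1 < ρ := by linarith
  refine ⟨(r : ℝ) ^ (u.length - 1) * (ρ / (ρ - 1)), r - ρ, by positivity, by linarith,
    by linarith, fun n _ => ?_⟩
  calc ({w : List (Fin r) | w.length ≤ n ∧ ¬ u <:+: w}.ncard : ℝ)
      ≤ ∑ k ∈ range (n + 1), ((avoidersOfLength u k).ncard : ℝ) := by
        exact_mod_cast ncard_setOf_length_le_avoiding_le_sum u n
    _ ≤ ∑ k ∈ range (n + 1), (r : ℝ) ^ (u.length - 1) * ρ ^ k :=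
        sum_le_sum fun k _ => (hlength k).trans (by gcongr; linarith)
    _ ≤ (r : ℝ) ^ (u.length - 1) * (ρ / (ρ - 1) * ρ ^ n) := by
        rw [← mul_sum]; gcongr; exact sum_range_succ_pow_le hρ n
    _ = _ := by rw [sub_sub_cancel, mul_assoc]
end

section
/- Let g : ℕ → ℕ be nondecreasing with positive values, set g(-1) = 0 and d(n) = g(n) - g(n-1), and suppose d(n) ≤ r·d(n-1) for all n ≥ 1, where r > 1. Then there exists a set S with an action of the free monoid W_r on r generators and a finite subset A ⊆ S generating S, such that the ball AW_r(n) (elements reachable from A by words of length at most n) has exactly g(n) elements for every n ≥ 0. -/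
/-- The ball of radius `n` around a subset `A` of an act over the free monoid of rank `r`:
the action of the free monoid is determined by the action `act` of the `r` generators,
and a word `w` (a list of generators) acts via `List.foldl act`. -/
def actBall {S : Type*} {r : ℕ} (act : S → Fin r → S) (A : Set S) (n : ℕ) : Set S :=
  {x | ∃ a ∈ A, ∃ w : List (Fin r), w.length ≤ n ∧ w.foldl act a = x}

/-! The act lives on the initial segment `{k : ℕ | ∃ n, k < g n}` of `ℕ`, and the ball of radius
`n` around `A = [0, g 0)` is `[0, g n)`. The layer `[g (m - 1), g m)` has `d m` elements; the
generator `j` sends the `i`-th element of layer `m` to the element `min (i * r + j) (d (m + 1) - 1)`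
of layer `m + 1`. As `d (m + 1) ≤ r * d m`, every element of layer `m + 1` is hit from layer `m`,
so the ball of radius `n + 1` is the ball of radius `n` together with layer `n + 1`. -/

section actBall

variable {S : Type*} {r : ℕ} (act : S → Fin r → S) (A : Set S)

theorem actBall_zero : actBall act A 0 = A := by
  ext x
  simp [actBall]

theorem actBall_succ (n : ℕ) :
    actBall act A (n + 1) = actBall act A n ∪ {y | ∃ x ∈ actBall act A n, ∃ j, act x j = y} := by
  ext y
  constructor
  · rintro ⟨a, ha, w, hw, rfl⟩
    rcases hw.lt_or_eq with hlt | heq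
    · exact Or.inl ⟨a, ha, w, Nat.le_of_lt_succ hlt, rfl⟩
    · obtain ⟨v, j, rfl⟩ := (List.eq_nil_or_concat w).resolve_left (by rintro rfl; simp at heq)
      exact Or.inr ⟨v.foldl act a, ⟨a, ha, v, by simpa using heq.le, rfl⟩, j, by simp⟩
  · rintro (⟨a, ha, w, hw, rfl⟩ | ⟨_, ⟨a, ha, w, hw, rfl⟩, j, rfl⟩)
    · exact ⟨a, ha, w, hw.trans n.le_succ, rfl⟩
    · exact ⟨a, ha, w ++ [j], by simpa using hw, by simp⟩

theorem actBall_eq_of_succ (L : ℕ → Set S) (h0 : L 0 = A)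
    (hsucc : ∀ n, L (n + 1) = L n ∪ {y | ∃ x ∈ L n, ∃ j, act x j = y}) (n : ℕ) :
    actBall act A n = L n := by
  induction n with
  | zero => rw [actBall_zero, h0]
  | succ n ih => rw [actBall_succ, ih, hsucc]

end actBall

theorem exists_mul_add_eq_of_lt_mul {r a t : ℕ} (ht : t < r * a) :
    ∃ i < a, ∃ j : Fin r, i * r + j = t := by
  have hr : 0 < r := Nat.pos_of_ne_zero (by rintro rfl; simp at ht)
  exact ⟨t / r, (Nat.div_lt_iff_lt_mul hr).2 (by linarith), ⟨t % r, Nat.mod_lt t hr⟩,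
    Nat.div_add_mod' t r⟩

namespace GrowthAct

def prev (g : ℕ → ℕ) : ℕ → ℕ
  | 0 => 0
  | m + 1 => g m

abbrev Carrier (g : ℕ → ℕ) : Type := {k : ℕ // ∃ n, k < g n}

variable {g : ℕ → ℕ}

theorem le_prev (hg : Monotone g) {i m : ℕ} (h : i < m) : g i ≤ prev g m := by
  cases m with
  | zero => omega
  | succ m => exact hg (Nat.le_of_lt_succ h)

noncomputable def level (x : Carrier g) : ℕ := Nat.find x.2

theorem level_eq (hg : Monotone g) {x : Carrier g} {m : ℕ} (h₁ : prev g m ≤ x.1)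
    (h₂ : x.1 < g m) : level x = m :=
  (Nat.find_eq_iff _).2 ⟨h₂, fun _ hi => (le_prev hg hi).trans h₁ |>.not_gt⟩

/-- If layer `level x + 1` is empty then so are all later layers, and `x` may stay fixed. -/
noncomputable def act (r : ℕ) (x : Carrier g) (j : Fin r) : Carrier g :=
  if h : g (level x) < g (level x + 1) then
    ⟨g (level x) + min ((x.1 - prev g (level x)) * r + j) (g (level x + 1) - g (level x) - 1),
      level x + 1, by omega⟩
  else x

theorem act_val_lt {r : ℕ} (hg : Monotone g) (x : Carrier g) (j : Fin r) {n : ℕ}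
    (hx : x.1 < g n) : (act r x j).1 < g (n + 1) := by
  have hmn : level x ≤ n := Nat.find_le hx
  unfold act
  split_ifs with h
  · have := hg (Nat.add_le_add_right hmn 1)
    dsimp only
    omega
  · exact hx.trans_le (hg n.le_succ)

theorem exists_act_eq {r : ℕ} (hg : Monotone g)
    (hd : ∀ m, g (m + 1) - g m ≤ r * (g m - prev g m)) {m k : ℕ} (hk₁ : g m ≤ k)
    (hk₂ : k < g (m + 1)) : ∃ x : Carrier g, x.1 < g m ∧ ∃ j, (act r x j).1 = k := by
  have hk : k - g m < g (m + 1) - g m := by omega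
  obtain ⟨i, hi, j, hij⟩ := exists_mul_add_eq_of_lt_mul (hk.trans_le (hd m))
  have hx : prev g m + i < g m := by omega
  let x : Carrier g := ⟨prev g m + i, m, hx⟩
  have hlevel : level x = m := level_eq hg (Nat.le_add_right _ _) hx
  refine ⟨x, hx, j, ?_⟩
  simp only [act, hlevel, dif_pos (hk₁.trans_lt hk₂), x, Nat.add_sub_cancel_left, hij]
  omega

theorem setOf_val_lt_succ {r : ℕ} (hg : Monotone g)
    (hd : ∀ m, g (m + 1) - g m ≤ r * (g m - prev g m)) (n : ℕ) :
    {x : Carrier g | x.1 < g (n + 1)} =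
      {x | x.1 < g n} ∪ {y | ∃ x ∈ {x : Carrier g | x.1 < g n}, ∃ j, act r x j = y} := by
  ext y
  constructor
  · intro hy
    by_cases hyn : y.1 < g n
    · exact Or.inl hyn
    · obtain ⟨x, hx, j, hxj⟩ := exists_act_eq hg hd (not_lt.1 hyn) hy
      exact Or.inr ⟨x, hx, j, Subtype.ext hxj⟩
  · rintro (hy | ⟨x, hx, j, rfl⟩)
    · exact hy.trans_le (hg n.le_succ)
    · exact act_val_lt hg x j hx

theorem finite_setOf_val_lt (n : ℕ) : {x : Carrier g | x.1 < g n}.Finite :=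
  (Set.finite_Iio (g n)).preimage Subtype.val_injective.injOn

theorem ncard_setOf_val_lt (n : ℕ) : {x : Carrier g | x.1 < g n}.ncard = g n := by
  have hrange : Set.Iio (g n) ⊆ Set.range (Subtype.val : Carrier g → ℕ) :=
    fun k hk => ⟨⟨k, n, hk⟩, rfl⟩
  exact (Set.ncard_preimage_of_injective_subset_range Subtype.val_injective hrange).trans
    (Set.ncard_Iio_nat _)

end GrowthAct

open GrowthAct

theorem exists_act_with_growth_general (r : ℕ) (g : ℕ → ℕ)
    (hmono : Monotone g)
    (hd0 : g 1 - g 0 ≤ r * g 0)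
    (hd : ∀ n, g (n + 2) - g (n + 1) ≤ r * (g (n + 1) - g n)) :
    ∃ (S : Type) (act : S → Fin r → S) (A : Set S),
      A.Finite ∧ (∀ x : S, ∃ a ∈ A, ∃ w : List (Fin r), w.foldl act a = x) ∧
      ∀ n, (actBall act A n).ncard = g n := by
  have hlayer : ∀ m, g (m + 1) - g m ≤ r * (g m - prev g m) := by
    rintro (_ | m)
    · simpa [prev] using hd0
    · exact hd m
  have hball (n : ℕ) : actBall (act r) {x : Carrier g | x.1 < g 0} n = {x | x.1 < g n} :=
    actBall_eq_of_succ _ _ (fun n => {x : Carrier g | x.1 < g n}) rfl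
      (setOf_val_lt_succ hmono hlayer) n
  refine ⟨Carrier g, act r, {x | x.1 < g 0}, finite_setOf_val_lt 0, fun x => ?_,
    fun n => by rw [hball, ncard_setOf_val_lt]⟩
  obtain ⟨a, ha, w, -, hw⟩ : x ∈ actBall (act r) {x : Carrier g | x.1 < g 0} (level x) := by
    rw [hball]
    exact Nat.find_spec x.2
  exact ⟨a, ha, w, hw⟩

/-- Any nondecreasing positive integer function `g` with successive differences
`d(n) = g(n) - g(n-1)` (where `g(-1) = 0`) satisfying `d(n) ≤ r·d(n-1)` is the growth
function of a finitely generated act over the free monoid of rank `r > 1`. -/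
theorem exists_act_with_growth (r : ℕ) (hr : 1 < r) (g : ℕ → ℕ)
    (hpos : ∀ n, 0 < g n) (hmono : Monotone g)
    (hd0 : g 1 - g 0 ≤ r * g 0)
    (hd : ∀ n, g (n + 2) - g (n + 1) ≤ r * (g (n + 1) - g n)) :
    ∃ (S : Type) (act : S → Fin r → S) (A : Set S),
      A.Finite ∧ (∀ x : S, ∃ a ∈ A, ∃ w : List (Fin r), w.foldl act a = x) ∧
      ∀ n, (actBall act A n).ncard = g n :=
  exists_act_with_growth_general r g hmono hd0 hd
end

section
/- Let L be the free module on a basis A of s elements over the free associative algebra R of rank r > 1 over a field, N a submodule, M = L/N. If there exists c > 0 with dim(image of B(A,n) in M) ≥ c·rⁿ for all n (i.e. M has maximal growth), then there exists θ with 0 < θ < 1 such that c_{A,N}(n)/g_{A,L}(n) < θ for all n, where c_{A,N}(n) = dim(N ∩ B(A,n)) and g_{A,L}(n) = dim B(A,n). Conversely, if dim(image of B(A,n) in M)/rⁿ → 0, then c_{A,N}(n)/g_{A,L}(n) → 1. -/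
open Module Filter

noncomputable section

/-- The `n`-th term of the standard filtration of the free associative algebra: the span of
the (images of the) monomials of degree at most `n`. -/
def freeAlgFil (Φ : Type*) [Field Φ] (r n : ℕ) : Submodule Φ (FreeAlgebra Φ (Fin r)) :=
  Submodule.span Φ
    {x | ∃ w : List (Fin r), w.length ≤ n ∧ x = (w.map (FreeAlgebra.ι Φ)).prod}

/-- The ball of radius `n` around the standard basis of the free module `ι →₀ R` over the
free associative algebra `R`. -/
def freeModBall (Φ : Type*) [Field Φ] (r : ℕ) (ι : Type*) (n : ℕ) :
    Submodule Φ (ι →₀ FreeAlgebra Φ (Fin r)) :=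
  Submodule.span Φ
    {x | ∃ i : ι, ∃ p ∈ freeAlgFil Φ r n, x = Finsupp.single i p}

/-!
Rank–nullity for the quotient map restricted to the ball `B(A,n)` gives
`c_{A,N}(n) = g_{A,L}(n) - dim (image of B(A,n) in M)`, so `c_{A,N}(n)/g_{A,L}(n)` is one minus
the relative growth of `M`. The monomials of length exactly `n` in one coordinate are linearly
independent and those of length at most `n` span the ball, whence `rⁿ ≤ g_{A,L}(n) < 2s·rⁿ`:
up to the constant `2s`, dividing by `g_{A,L}(n)` is the same as dividing by `rⁿ`.
-/

theorem finrank_span_image_add_finrank_ker_inf {K V W : Type*} [Field K] [AddCommGroup V]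
    [Module K V] [AddCommGroup W] [Module K W] (f : V →ₗ[K] W) (B : Submodule K V)
    [FiniteDimensional K B] :
    finrank K (Submodule.span K (f '' B)) + finrank K (LinearMap.ker f ⊓ B : Submodule K V) =
      finrank K B := by
  rw [Submodule.span_image, Submodule.span_eq, ← LinearMap.range_domRestrict, inf_comm,
    ← Submodule.map_comap_subtype, Submodule.finrank_map_subtype_eq, ← LinearMap.ker_domRestrict]
  exact (f.domRestrict B).finrank_range_add_finrank_ker

theorem finrank_span_mkQ_image_add_finrank_inf {K R M : Type*} [Field K] [Ring R]
    [AddCommGroup M] [Module K M] [Module R M] [SMul K R] [IsScalarTower K R M]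
    (N : Submodule R M) (B : Submodule K M) [FiniteDimensional K B] :
    finrank K (Submodule.span K (N.mkQ '' B)) +
      finrank K (N.restrictScalars K ⊓ B : Submodule K M) = finrank K B := by
  have h := finrank_span_image_add_finrank_ker_inf (N.mkQ.restrictScalars K) B
  rwa [LinearMap.ker_restrictScalars, Submodule.ker_mkQ] at h

theorem FreeAlgebra.basisFreeMonoid_apply (R X : Type*) [CommSemiring R] (m : FreeMonoid X) :
    basisFreeMonoid R X m = ((FreeMonoid.toList m).map (ι R)).prod := by
  simp [basisFreeMonoid, equivMonoidAlgebraFreeMonoid, FreeMonoid.lift_apply]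

theorem Nat.geomSum_range_succ_lt {r : ℕ} (hr : 2 ≤ r) (n : ℕ) :
    ∑ k ∈ Finset.range (n + 1), r ^ k < 2 * r ^ n := by
  rw [Finset.sum_range_succ, two_mul, add_comm]
  exact Nat.add_lt_add_left (Nat.geomSum_lt hr fun k hk => Finset.mem_range.1 hk) _

section FreeModBall

variable (Φ : Type*) [Field Φ] (r : ℕ) (ι : Type*) (n : ℕ)

def freeModBallMonomial (p : ι × Σ k : Fin (n + 1), (Fin k → Fin r)) :
    ι →₀ FreeAlgebra Φ (Fin r) :=
  Finsupp.single p.1 (((List.ofFn p.2.2).map (FreeAlgebra.ι Φ)).prod)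

theorem freeModBall_le_span_monomial :
    freeModBall Φ r ι n ≤ Submodule.span Φ (Set.range (freeModBallMonomial Φ r ι n)) := by
  rw [freeModBall, Submodule.span_le]
  rintro _ ⟨i, p, hp, rfl⟩
  have hp' : Finsupp.single i p ∈ (freeAlgFil Φ r n).map (Finsupp.lsingle i) := ⟨p, hp, rfl⟩
  rw [freeAlgFil, Submodule.map_span] at hp'
  refine Submodule.span_mono ?_ hp'
  rintro _ ⟨_, ⟨w, hw, rfl⟩, rfl⟩
  exact ⟨(i, ⟨⟨w.length, by omega⟩, w.get⟩), by simp [freeModBallMonomial]⟩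

instance [Finite ι] : FiniteDimensional Φ (freeModBall Φ r ι n) :=
  have := FiniteDimensional.span_of_finite Φ (Set.finite_range (freeModBallMonomial Φ r ι n))
  Submodule.finiteDimensional_of_le (freeModBall_le_span_monomial Φ r ι n)

theorem finrank_freeModBall_le [Fintype ι] :
    finrank Φ (freeModBall Φ r ι n) ≤ Fintype.card ι * ∑ k ∈ Finset.range (n + 1), r ^ k := by
  have := FiniteDimensional.span_of_finite Φ (Set.finite_range (freeModBallMonomial Φ r ι n))
  refine (Submodule.finrank_mono (freeModBall_le_span_monomial Φ r ι n)).trans ?_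
  refine (finrank_range_le_card _).trans_eq ?_
  simp [Fintype.card_sigma, Fin.sum_univ_eq_sum_range (fun k => r ^ k)]

theorem finrank_freeModBall_lt [Fintype ι] [Nonempty ι] (hr : 2 ≤ r) :
    finrank Φ (freeModBall Φ r ι n) < 2 * Fintype.card ι * r ^ n := by
  refine (finrank_freeModBall_le Φ r ι n).trans_lt ?_
  rw [mul_comm 2, mul_assoc]
  exact Nat.mul_lt_mul_of_pos_left (Nat.geomSum_range_succ_lt hr n) (Fintype.card_pos (α := ι))

theorem pow_le_finrank_freeModBall [Finite ι] [Nonempty ι] :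
    r ^ n ≤ finrank Φ (freeModBall Φ r ι n) := by
  obtain ⟨i₀⟩ := ‹Nonempty ι›
  let b := Finsupp.basis fun _ : ι => FreeAlgebra.basisFreeMonoid Φ (Fin r)
  let u : (Fin n → Fin r) → Σ _ : ι, FreeMonoid (Fin r) :=
    fun f => ⟨i₀, FreeMonoid.ofList (List.ofFn f)⟩
  have hu : u.Injective := fun f g hfg =>
    List.ofFn_injective (FreeMonoid.ofList.injective (eq_of_heq (Sigma.mk.inj hfg).2))
  have hspan : Submodule.span Φ (Set.range (b ∘ u)) ≤ freeModBall Φ r ι n := by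
    rw [Submodule.span_le]
    rintro _ ⟨f, rfl⟩
    refine Submodule.subset_span ⟨i₀, _, Submodule.subset_span ⟨List.ofFn f, by simp, rfl⟩, ?_⟩
    simp [b, u, Finsupp.coe_basis, FreeAlgebra.basisFreeMonoid_apply]
  calc r ^ n = finrank Φ (Submodule.span Φ (Set.range (b ∘ u))) := by
        rw [finrank_span_eq_card (b.linearIndependent.comp u hu)]; simp
    _ ≤ finrank Φ (freeModBall Φ r ι n) := Submodule.finrank_mono hspan

end FreeModBall

theorem exists_sub_div_lt_of_le_mul_pow {m g : ℕ → ℝ} {c K ρ : ℝ} (hc : 0 < c) (hρ : 0 < ρ)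
    (hm : ∀ n, c * ρ ^ n ≤ m n) (hmg : ∀ n, m n ≤ g n) (hg : ∀ n, g n < K * ρ ^ n) :
    ∃ θ, 0 < θ ∧ θ < 1 ∧ ∀ n, (g n - m n) / g n < θ := by
  have hcK : c < K := by simpa using (hm 0).trans_lt ((hmg 0).trans_lt (hg 0))
  have hK : 0 < K := hc.trans hcK
  refine ⟨1 - c / K, by rwa [sub_pos, div_lt_one hK], by linarith [div_pos hc hK], fun n => ?_⟩
  have hgn : 0 < g n := (mul_pos hc (pow_pos hρ n)).trans_le ((hm n).trans (hmg n))
  have hcg : c / K * g n < c * ρ ^ n :=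
    calc c / K * g n < c / K * (K * ρ ^ n) := by gcongr; exact hg n
      _ = c * ρ ^ n := by field_simp
  rw [div_lt_iff₀ hgn]
  linarith [hm n]

theorem tendsto_sub_div_of_tendsto_div_pow {m g : ℕ → ℝ} {ρ : ℝ} (hρ : 0 < ρ)
    (hm : ∀ n, 0 ≤ m n) (hg : ∀ n, ρ ^ n ≤ g n)
    (h : Tendsto (fun n => m n / ρ ^ n) atTop (nhds 0)) :
    Tendsto (fun n => (g n - m n) / g n) atTop (nhds 1) := by
  have hgn n : 0 < g n := (pow_pos hρ n).trans_le (hg n)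
  have hmg : Tendsto (fun n => m n / g n) atTop (nhds 0) :=
    squeeze_zero (fun n => div_nonneg (hm n) (hgn n).le)
      (fun n => div_le_div_of_nonneg_left (hm n) (pow_pos hρ n) (hg n)) h
  simpa [sub_div, div_self (hgn _).ne'] using (tendsto_const_nhds (x := (1 : ℝ))).sub hmg

/-- Co-growth versus growth for quotients of a free module `L` over the free associative
algebra of rank `r > 1`: if `M = L/N` has maximal growth then the ratio
`c_{A,N}(n)/g_{A,L}(n)` stays bounded away from `1` by some `θ < 1`; if the growth of `M`
is not maximal (i.e. `g_{Ā,M}(n)/rⁿ → 0`) then this ratio tends to `1`. -/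
theorem cogrowth_ratio (Φ : Type*) [Field Φ] (r : ℕ) (hr : 1 < r)
    (ι : Type*) [Fintype ι] [Nonempty ι]
    (N : Submodule (FreeAlgebra Φ (Fin r)) (ι →₀ FreeAlgebra Φ (Fin r))) :
    ((∃ c : ℝ, 0 < c ∧ ∀ n : ℕ, c * (r : ℝ) ^ n ≤
        (finrank Φ (Submodule.span Φ (N.mkQ '' (freeModBall Φ r ι n : Set _))) : ℝ)) →
      ∃ θ : ℝ, 0 < θ ∧ θ < 1 ∧ ∀ n : ℕ,
        ((finrank Φ (N.restrictScalars Φ ⊓ freeModBall Φ r ι n : Submodule Φ _) : ℝ) /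
          (finrank Φ (freeModBall Φ r ι n) : ℝ)) < θ) ∧
    (Tendsto (fun n : ℕ =>
        (finrank Φ (Submodule.span Φ (N.mkQ '' (freeModBall Φ r ι n : Set _))) : ℝ)
          / (r : ℝ) ^ n) atTop (nhds 0) →
      Tendsto (fun n : ℕ =>
        ((finrank Φ (N.restrictScalars Φ ⊓ freeModBall Φ r ι n : Submodule Φ _) : ℝ) /
          (finrank Φ (freeModBall Φ r ι n) : ℝ))) atTop (nhds 1)) := by
  have hρ : (0 : ℝ) < r := by positivity
  have hrank n := finrank_span_mkQ_image_add_finrank_inf N (freeModBall Φ r ι n)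
  have hcogrowth n : (finrank Φ (N.restrictScalars Φ ⊓ freeModBall Φ r ι n : Submodule Φ _) : ℝ)
      = finrank Φ (freeModBall Φ r ι n)
        - finrank Φ (Submodule.span Φ (N.mkQ '' (freeModBall Φ r ι n : Set _))) := by
    rw [← hrank n]; push_cast; ring
  simp only [hcogrowth]
  refine ⟨fun ⟨c, hc, hm⟩ => exists_sub_div_lt_of_le_mul_pow (K := 2 * Fintype.card ι) hc hρ hm
      (fun n => by exact_mod_cast Nat.le.intro (hrank n))
      (fun n => by exact_mod_cast finrank_freeModBall_lt Φ r ι n hr),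
    tendsto_sub_div_of_tendsto_div_pow hρ (fun n => Nat.cast_nonneg _)
      (fun n => by exact_mod_cast pow_le_finrank_freeModBall Φ r ι n)⟩
end
end

section
/- Let Γ be a connected graph (multigraph allowed) with a distinguished vertex o, and let m > 1 be an integer such that every vertex has degree at most m. For v a vertex, let |v| denote the combinatorial distance from o to v. Then Σ_{v ∈ V(Γ)} (m - deg(v))·(m-1)^{-|v|} ≤ m. -/
open ENNReal

private lemma aux_exists_adj_dist {V : Type*} (G : SimpleGraph V) (hconn : G.Connected)
    (o v : V) (n : ℕ) (hv : G.dist o v = n + 1) :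
    ∃ w, G.Adj v w ∧ G.dist o w = n := by
  have hne : v ≠ o := by
    rintro rfl
    rw [SimpleGraph.dist_self] at hv
    omega
  obtain ⟨p, hp⟩ := (hconn v o).exists_walk_length_eq_dist
  rw [SimpleGraph.dist_comm, hv] at hp
  obtain ⟨w, h, r, rfl⟩ := SimpleGraph.Walk.exists_eq_cons_of_ne hne p
  have hr : r.length = n := by
    simpa [SimpleGraph.Walk.length_cons] using hp
  refine ⟨w, h, le_antisymm ?_ ?_⟩
  · calc G.dist o w = G.dist w o := SimpleGraph.dist_comm
      _ ≤ r.length := SimpleGraph.dist_le r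
      _ = n := hr
  · have h1 : G.dist w v = 1 := SimpleGraph.dist_eq_one_iff_adj.mpr h.symm
    have htri : G.dist o v ≤ G.dist o w + G.dist w v := hconn.dist_triangle
    rw [hv, h1] at htri
    omega

private lemma aux_sphere_finite {V : Type*} (G : SimpleGraph V)
    [∀ v : V, Fintype (G.neighborSet v)] (hconn : G.Connected) (o : V) :
    ∀ n : ℕ, {v : V | G.dist o v = n}.Finite := by
  intro n
  induction n with
  | zero =>
    refine (Set.finite_singleton o).subset ?_
    intro v hv
    have : o = v := hconn.dist_eq_zero_iff.mp hv
    simp [this.symm]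
  | succ n ih =>
    refine (ih.biUnion (fun w _ => (G.neighborSet w).toFinite)).subset ?_
    intro v hv
    obtain ⟨w, hadj, hw⟩ := aux_exists_adj_dist G hconn o v n hv
    exact Set.mem_biUnion hw hadj.symm

/-- Let `Γ` be a connected graph with distinguished vertex `o` in which every vertex has
degree at most `m` (`m > 1`). Then `Σ_v (m - deg v)·(m-1)^{-|v|} ≤ m`, where `|v|` is the
distance from `o` to `v`; the (possibly infinite) sum of nonnegative terms is taken
in `ℝ≥0∞`. -/
theorem deficiency_sum_le (V : Type*) (G : SimpleGraph V)
    [∀ v : V, Fintype (G.neighborSet v)] (hconn : G.Connected) (o : V)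
    (m : ℕ) (hm : 1 < m) (hdeg : ∀ v : V, G.degree v ≤ m) :
    ∑' v : V, ((m - G.degree v : ℕ) : ℝ≥0∞) * (((m : ℝ≥0∞) - 1)⁻¹) ^ (G.dist o v)
      ≤ (m : ℝ≥0∞) := by
  classical
  set q : ℝ≥0∞ := ((m : ℝ≥0∞) - 1)⁻¹ with hq_def
  -- basic facts about q
  have hm1 : ((m : ℝ≥0∞) - 1) = ((m - 1 : ℕ) : ℝ≥0∞) := by
    rw [ENNReal.natCast_sub, Nat.cast_one]
  have hq1 : ((m - 1 : ℕ) : ℝ≥0∞) * q = 1 := by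
    rw [hq_def, ← hm1]
    refine ENNReal.mul_inv_cancel ?_ ?_
    · rw [hm1]
      exact Nat.cast_ne_zero.mpr (by omega)
    · rw [hm1]
      exact ENNReal.natCast_ne_top _
  -- spheres
  have hfin : ∀ n : ℕ, {v : V | G.dist o v = n}.Finite := aux_sphere_finite G hconn o
  set F : ℕ → Finset V := fun n => (hfin n).toFinset with hF_def
  have hF : ∀ (n : ℕ) (v : V), v ∈ F n ↔ G.dist o v = n := by
    intro n v
    rw [hF_def]
    exact Set.Finite.mem_toFinset _
  set d : V → ℕ → ℕ :=
    fun v k => ((G.neighborFinset v).filter (fun w => G.dist o w = k)).card with hd_def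
  set E : ℕ → ℕ := fun n => ∑ v ∈ F n, d v (n + 1) with hE_def
  set D : ℕ → ℕ := fun n => ∑ v ∈ F n, (m - G.degree v) with hD_def
  -- d as count over a sphere
  have hswap : ∀ (b : ℕ) (v : V), d v b = ((F b).filter (fun w => G.Adj v w)).card := by
    intro b v
    simp only [hd_def]
    congr 1
    ext w
    simp only [Finset.mem_filter, SimpleGraph.mem_neighborFinset, hF]
    tauto
  -- double counting of edges between consecutive spheres
  have hdouble : ∀ n : ℕ, ∑ v ∈ F (n + 1), d v n = E n := by
    intro n
    calc ∑ v ∈ F (n + 1), d v n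
        = ∑ v ∈ F (n + 1), ∑ w ∈ F n, if G.Adj v w then 1 else 0 := by
          refine Finset.sum_congr rfl fun v _ => ?_
          rw [hswap, Finset.card_filter]
      _ = ∑ w ∈ F n, ∑ v ∈ F (n + 1), if G.Adj v w then 1 else 0 := Finset.sum_comm
      _ = ∑ w ∈ F n, d w (n + 1) := by
          refine Finset.sum_congr rfl fun w _ => ?_
          rw [hswap, Finset.card_filter]
          refine Finset.sum_congr rfl fun v _ => ?_
          rw [G.adj_comm]
      _ = E n := by simp only [hE_def]
  -- pointwise degree bound
  have hd_le : ∀ (n : ℕ) (v : V), d v n + d v (n + 2) ≤ G.degree v := by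
    intro n v
    simp only [hd_def]
    rw [← SimpleGraph.card_neighborFinset_eq_degree]
    have hdisj : Disjoint ((G.neighborFinset v).filter (fun w => G.dist o w = n))
        ((G.neighborFinset v).filter (fun w => G.dist o w = n + 2)) := by
      rw [Finset.disjoint_left]
      intro w hw1 hw2
      simp only [Finset.mem_filter] at hw1 hw2
      omega
    calc _ = (((G.neighborFinset v).filter (fun w => G.dist o w = n)) ∪
          ((G.neighborFinset v).filter (fun w => G.dist o w = n + 2))).card :=
          (Finset.card_union_of_disjoint hdisj).symm
      _ ≤ (G.neighborFinset v).card :=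
          Finset.card_le_card (Finset.union_subset (Finset.filter_subset _ _)
            (Finset.filter_subset _ _))
  -- every vertex on the sphere n+1 has a neighbour on sphere n
  have hd_pos : ∀ (n : ℕ) (v : V), v ∈ F (n + 1) → 1 ≤ d v n := by
    intro n v hv
    obtain ⟨w, hadj, hw⟩ := aux_exists_adj_dist G hconn o v n ((hF _ _).mp hv)
    simp only [hd_def]
    refine Finset.card_pos.mpr ⟨w, ?_⟩
    simp only [Finset.mem_filter, SimpleGraph.mem_neighborFinset]
    exact ⟨hadj, hw⟩
  -- the key recursive inequality
  have hkey : ∀ n : ℕ, D (n + 1) + E (n + 1) ≤ (m - 1) * E n := by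
    intro n
    have h1 : D (n + 1) + E (n + 1) + (∑ v ∈ F (n + 1), d v n)
        ≤ m * (∑ v ∈ F (n + 1), d v n) := by
      simp only [hD_def, hE_def]
      rw [← Finset.sum_add_distrib, ← Finset.sum_add_distrib, Finset.mul_sum]
      refine Finset.sum_le_sum fun v hv => ?_
      have hnn : n + 1 + 1 = n + 2 := rfl
      rw [hnn]
      have h2 := hd_le n v
      have h3 := hd_pos n v hv
      have h4 := hdeg v
      calc m - G.degree v + d v (n + 2) + d v n ≤ m := by omega
        _ ≤ m * d v n := Nat.le_mul_of_pos_right m h3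
    rw [hdouble n] at h1
    have hE : E n ≤ m * E n := Nat.le_mul_of_pos_left _ (by omega)
    rw [Nat.sub_one_mul]
    omega
  -- the main induction: truncated sums plus boundary term are at most m
  have hmain : ∀ N : ℕ,
      (∑ n ∈ Finset.range (N + 1), (D n : ℝ≥0∞) * q ^ n) + (E N : ℝ≥0∞) * q ^ N
        ≤ (m : ℝ≥0∞) := by
    intro N
    induction N with
    | zero =>
      simp only [zero_add, Finset.sum_range_one, pow_zero, mul_one]
      have hF0 : F 0 = {o} := by
        ext v
        rw [hF, Finset.mem_singleton]
        constructor
        · intro h; exact (hconn.dist_eq_zero_iff.mp h).symm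
        · rintro rfl; simp
      have hne : D 0 + E 0 ≤ m := by
        simp only [hD_def, hE_def, hF0, Finset.sum_singleton, zero_add]
        have h1 : d o 1 ≤ G.degree o := by
          simp only [hd_def]
          rw [← SimpleGraph.card_neighborFinset_eq_degree]
          exact Finset.card_filter_le _ _
        have h2 := hdeg o
        omega
      calc (D 0 : ℝ≥0∞) + (E 0 : ℝ≥0∞) = ((D 0 + E 0 : ℕ) : ℝ≥0∞) := by push_cast; ring
        _ ≤ (m : ℝ≥0∞) := Nat.cast_le.mpr hne
    | succ N ih =>
      rw [Finset.sum_range_succ]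
      have step : (D (N + 1) : ℝ≥0∞) * q ^ (N + 1) + (E (N + 1) : ℝ≥0∞) * q ^ (N + 1)
          ≤ (E N : ℝ≥0∞) * q ^ N := by
        calc (D (N + 1) : ℝ≥0∞) * q ^ (N + 1) + (E (N + 1) : ℝ≥0∞) * q ^ (N + 1)
            = ((D (N + 1) + E (N + 1) : ℕ) : ℝ≥0∞) * q ^ (N + 1) := by push_cast; ring
          _ ≤ (((m - 1) * E N : ℕ) : ℝ≥0∞) * q ^ (N + 1) := by
              gcongr
              exact_mod_cast Nat.cast_le.mpr (hkey N)
          _ = (E N : ℝ≥0∞) * (((m - 1 : ℕ) : ℝ≥0∞) * q) * q ^ N := by push_cast; ring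
          _ = (E N : ℝ≥0∞) * q ^ N := by rw [hq1, mul_one]
      calc (∑ n ∈ Finset.range (N + 1), (D n : ℝ≥0∞) * q ^ n) + (D (N + 1) : ℝ≥0∞) * q ^ (N + 1)
            + (E (N + 1) : ℝ≥0∞) * q ^ (N + 1)
          = (∑ n ∈ Finset.range (N + 1), (D n : ℝ≥0∞) * q ^ n)
            + ((D (N + 1) : ℝ≥0∞) * q ^ (N + 1) + (E (N + 1) : ℝ≥0∞) * q ^ (N + 1)) := by ring
        _ ≤ (∑ n ∈ Finset.range (N + 1), (D n : ℝ≥0∞) * q ^ n) + (E N : ℝ≥0∞) * q ^ N := by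
            gcongr
        _ ≤ (m : ℝ≥0∞) := ih
  -- conclusion
  rw [ENNReal.tsum_eq_iSup_sum]
  refine iSup_le fun A => ?_
  set N : ℕ := A.sup (G.dist o) with hN_def
  have hdisjF : Set.PairwiseDisjoint ↑(Finset.range (N + 1)) F := by
    intro i _ j _ hij
    refine Finset.disjoint_left.mpr fun v hvi hvj => hij ?_
    rw [← (hF i v).mp hvi, (hF j v).mp hvj]
  have hsub : A ⊆ (Finset.range (N + 1)).biUnion F := by
    intro v hv
    refine Finset.mem_biUnion.mpr ⟨G.dist o v, ?_, (hF _ _).mpr rfl⟩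
    exact Finset.mem_range.mpr (Nat.lt_succ_of_le (Finset.le_sup hv))
  calc ∑ v ∈ A, ((m - G.degree v : ℕ) : ℝ≥0∞) * q ^ (G.dist o v)
      ≤ ∑ v ∈ (Finset.range (N + 1)).biUnion F,
          ((m - G.degree v : ℕ) : ℝ≥0∞) * q ^ (G.dist o v) :=
        Finset.sum_le_sum_of_subset hsub
    _ = ∑ n ∈ Finset.range (N + 1), ∑ v ∈ F n,
          ((m - G.degree v : ℕ) : ℝ≥0∞) * q ^ (G.dist o v) :=
        Finset.sum_biUnion hdisjF
    _ = ∑ n ∈ Finset.range (N + 1), (D n : ℝ≥0∞) * q ^ n := by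
        refine Finset.sum_congr rfl fun n _ => ?_
        simp only [hD_def]
        push_cast [Finset.sum_mul]
        refine Finset.sum_congr rfl fun v hv => ?_
        rw [(hF n v).mp hv]
    _ ≤ (∑ n ∈ Finset.range (N + 1), (D n : ℝ≥0∞) * q ^ n) + (E N : ℝ≥0∞) * q ^ N :=
        le_self_add
    _ ≤ (m : ℝ≥0∞) := hmain N
end

section
/- Let G be the Cayley graph of the action of the free group F of rank r > 1 on the coset space F/H (a connected 2r-regular graph), with B(n) the ball of radius n around the vertex o = H. If #B(n) ≥ c(2r-1)ⁿ for some real c > 0 and some integer n > 0, then #B(m) ≥ ((2r-2)/(2r-1))·c·(2r-1)^m for all integers m with 0 < m < n. -/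
def cosetBall {r : ℕ} (H : Subgroup (FreeGroup (Fin r))) (n : ℕ) :
    Set (FreeGroup (Fin r) ⧸ H) :=
  {x | ∃ g : FreeGroup (Fin r), (FreeGroup.toWord g).length ≤ n ∧ QuotientGroup.mk g = x}

/-!
Write `Q = 2r - 1`. A coset at distance `j + 1` from the base point is `a • y` for a letter `a`
and a coset `y` at distance `j`. If `j ≥ 1`, then among the `2r` letters there is one moving `y`
closer to the base point (the inverse of the first letter of a shortest representative of `y`),
so at most `Q` of them move it farther out, and the sphere of radius `j + 1` has at most `Q`
times as many points as the sphere of radius `j`. Summing over spheres,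
`#B(m + k) ≤ #B(m) (1 + Q + ⋯ + Q^k) < #B(m) Q^(k+1) / (Q - 1)` for `m ≥ 1`, which together with
`c Q^(m+k) ≤ #B(m + k)` is the claim.
-/

namespace FreeGroup

variable {α : Type*} [DecidableEq α] {H : Subgroup (FreeGroup α)}

/-- The distance from the base point `H` to `x` in the Schreier coset graph. -/
noncomputable def cosetNorm (H : Subgroup (FreeGroup α)) (x : FreeGroup α ⧸ H) : ℕ :=
  sInf (norm '' {g : FreeGroup α | (g : FreeGroup α ⧸ H) = x})

theorem cosetNorm_mk_le (g : FreeGroup α) : cosetNorm H (g : FreeGroup α ⧸ H) ≤ norm g :=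
  Nat.sInf_le ⟨g, rfl, rfl⟩

theorem exists_norm_eq_cosetNorm (x : FreeGroup α ⧸ H) :
    ∃ g : FreeGroup α, (g : FreeGroup α ⧸ H) = x ∧ norm g = cosetNorm H x :=
  Nat.sInf_mem (Set.Nonempty.image norm (QuotientGroup.mk_surjective x))

theorem cosetNorm_smul_le (g : FreeGroup α) (x : FreeGroup α ⧸ H) :
    cosetNorm H (g • x) ≤ norm g + cosetNorm H x := by
  obtain ⟨h, rfl, hh⟩ := exists_norm_eq_cosetNorm x
  rw [← hh]
  exact (cosetNorm_mk_le (g * h)).trans (norm_mul_le g h)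

theorem exists_letter_smul_eq {x : FreeGroup α ⧸ H} {j : ℕ} (hx : cosetNorm H x = j + 1) :
    ∃ a : α × Bool, ∃ y, cosetNorm H y = j ∧ mk [a] • y = x := by
  obtain ⟨g, rfl, hg⟩ := exists_norm_eq_cosetNorm x
  obtain ⟨a, w, hw⟩ := List.exists_cons_of_length_eq_add_one (hg.trans hx)
  have hw_len : w.length = j := by simpa [norm, hw] using hg.trans hx
  have hsmul : mk [a] • (mk w : FreeGroup α ⧸ H) = g := by
    rw [← mk_toWord (x := g), hw, ← List.singleton_append, ← mul_mk]; rfl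
  refine ⟨a, mk w, le_antisymm ((cosetNorm_mk_le _).trans (norm_mk_le.trans hw_len.le)) ?_, hsmul⟩
  have : j + 1 ≤ 1 + cosetNorm H (mk w : FreeGroup α ⧸ H) :=
    calc j + 1 = cosetNorm H (mk [a] • (mk w : FreeGroup α ⧸ H)) := by rw [hsmul, hx]
      _ ≤ norm (mk [a]) + cosetNorm H (mk w : FreeGroup α ⧸ H) := cosetNorm_smul_le _ _
      _ ≤ 1 + cosetNorm H (mk w : FreeGroup α ⧸ H) := by gcongr; exact norm_mk_le
  omega

theorem exists_letter_cosetNorm_smul_lt {y : FreeGroup α ⧸ H} (hy : 0 < cosetNorm H y) :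
    ∃ a : α × Bool, cosetNorm H (mk [a] • y) < cosetNorm H y := by
  obtain ⟨g, rfl, hg⟩ := exists_norm_eq_cosetNorm y
  obtain ⟨b, w, hw⟩ := List.exists_cons_of_ne_nil (List.ne_nil_of_length_pos (hg ▸ hy))
  refine ⟨(b.1, !b.2), ?_⟩
  have hinv : mk [(b.1, !b.2)] = (mk [b])⁻¹ := by simp [inv_mk, invRev]
  have hcancel : mk [(b.1, !b.2)] * g = mk w := by
    rw [hinv, ← mk_toWord (x := g), hw]
    exact inv_mul_cancel_left (mk [b]) (mk w)
  calc cosetNorm H (mk [(b.1, !b.2)] • (g : FreeGroup α ⧸ H))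
      = cosetNorm H (mk w : FreeGroup α ⧸ H) := by rw [← hcancel]; rfl
    _ ≤ w.length := (cosetNorm_mk_le _).trans norm_mk_le
    _ < norm g := by simp [norm, hw]
    _ = cosetNorm H g := hg

def cosetClosedBall (H : Subgroup (FreeGroup α)) (j : ℕ) : Set (FreeGroup α ⧸ H) :=
  {x | cosetNorm H x ≤ j}

def cosetSphere (H : Subgroup (FreeGroup α)) (j : ℕ) : Set (FreeGroup α ⧸ H) :=
  {x | cosetNorm H x = j}

theorem cosetSphere_subset_cosetClosedBall (j : ℕ) : cosetSphere H j ⊆ cosetClosedBall H j :=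
  fun _ hx => le_of_eq hx

theorem cosetClosedBall_succ_subset (j : ℕ) :
    cosetClosedBall H (j + 1) ⊆ cosetClosedBall H j ∪ cosetSphere H (j + 1) :=
  fun _ hx => Nat.le_succ_iff.mp hx

theorem finite_cosetClosedBall [Finite α] (j : ℕ) : (cosetClosedBall H j).Finite := by
  have hfin : {g : FreeGroup α | norm g ≤ j}.Finite :=
    (List.finite_length_le _ j).preimage toWord_injective.injOn
  refine (hfin.image QuotientGroup.mk).subset fun x (hx : cosetNorm H x ≤ j) => ?_
  obtain ⟨g, rfl, hg⟩ := exists_norm_eq_cosetNorm x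
  exact ⟨g, hg.trans_le hx, rfl⟩

theorem finite_cosetSphere [Finite α] (j : ℕ) : (cosetSphere H j).Finite :=
  (finite_cosetClosedBall j).subset (cosetSphere_subset_cosetClosedBall j)

variable [Fintype α]

theorem ncard_setOf_lt_cosetNorm_smul_le {y : FreeGroup α ⧸ H}
    (hy : 0 < cosetNorm H y) :
    {a : α × Bool | cosetNorm H y < cosetNorm H (mk [a] • y)}.ncard ≤ 2 * Fintype.card α - 1 := by
  obtain ⟨a₀, ha₀⟩ := exists_letter_cosetNorm_smul_lt hy
  have hsub : {a : α × Bool | cosetNorm H y < cosetNorm H (mk [a] • y)} ⊆ {a₀}ᶜ := by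
    rintro a ha rfl
    exact ha.asymm ha₀
  refine (Set.ncard_le_ncard hsub).trans_eq ?_
  rw [Set.ncard_compl, Set.ncard_singleton, Nat.card_eq_fintype_card, Fintype.card_prod,
    Fintype.card_bool, mul_comm]

theorem ncard_cosetSphere_succ_le {j : ℕ} (hj : 0 < j) :
    (cosetSphere H (j + 1)).ncard ≤ (2 * Fintype.card α - 1) * (cosetSphere H j).ncard := by
  let T := (finite_cosetSphere (H := H) j).toFinset
  let outward (y : FreeGroup α ⧸ H) : Set (FreeGroup α ⧸ H) :=
    (fun a : α × Bool => mk [a] • y) '' {a | cosetNorm H y < cosetNorm H (mk [a] • y)}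
  have hcover : cosetSphere H (j + 1) ⊆ ⋃ y ∈ T, outward y := fun x hx => by
    obtain ⟨a, y, hy, rfl⟩ := exists_letter_smul_eq hx
    refine Set.mem_iUnion₂.mpr ⟨y, (finite_cosetSphere j).mem_toFinset.mpr hy, a, ?_, rfl⟩
    exact (hy.trans_lt j.lt_succ_self).trans_eq hx.symm
  calc (cosetSphere H (j + 1)).ncard ≤ (⋃ y ∈ T, outward y).ncard :=
        Set.ncard_le_ncard hcover (Set.toFinite _)
    _ ≤ ∑ y ∈ T, (outward y).ncard := Finset.set_ncard_biUnion_le _ _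
    _ ≤ ∑ _y ∈ T, (2 * Fintype.card α - 1) := by
        refine Finset.sum_le_sum fun y hy => (Set.ncard_image_le (Set.toFinite _)).trans ?_
        exact ncard_setOf_lt_cosetNorm_smul_le
          (hj.trans_eq ((finite_cosetSphere j).mem_toFinset.mp hy).symm)
    _ = (2 * Fintype.card α - 1) * (cosetSphere H j).ncard := by
        rw [Finset.sum_const, smul_eq_mul, Set.ncard_eq_toFinset_card _ (finite_cosetSphere j),
          mul_comm]

theorem ncard_cosetSphere_add_le {m : ℕ} (hm : 0 < m) (i : ℕ) :
    (cosetSphere H (m + i)).ncard ≤ (2 * Fintype.card α - 1) ^ i * (cosetSphere H m).ncard := by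
  induction i with
  | zero => simp
  | succ i ih =>
    calc (cosetSphere H (m + i + 1)).ncard
        ≤ (2 * Fintype.card α - 1) * (cosetSphere H (m + i)).ncard :=
          ncard_cosetSphere_succ_le (by omega)
      _ ≤ (2 * Fintype.card α - 1) ^ (i + 1) * (cosetSphere H m).ncard := by
          rw [pow_succ', mul_assoc]
          exact Nat.mul_le_mul_left _ ih

theorem ncard_cosetClosedBall_add_le {m : ℕ} (hm : 0 < m) (i : ℕ) :
    (cosetClosedBall H (m + i)).ncard
      ≤ (cosetClosedBall H m).ncard * ∑ l ∈ Finset.range (i + 1), (2 * Fintype.card α - 1) ^ l := by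
  induction i with
  | zero => simp
  | succ i ih =>
    have hsphere : (cosetSphere H (m + (i + 1))).ncard
        ≤ (2 * Fintype.card α - 1) ^ (i + 1) * (cosetClosedBall H m).ncard :=
      (ncard_cosetSphere_add_le hm _).trans <| Nat.mul_le_mul_left _ <|
        Set.ncard_le_ncard (cosetSphere_subset_cosetClosedBall m) (finite_cosetClosedBall m)
    calc (cosetClosedBall H (m + i + 1)).ncard
        ≤ (cosetClosedBall H (m + i)).ncard + (cosetSphere H (m + (i + 1))).ncard :=
          (Set.ncard_le_ncard (cosetClosedBall_succ_subset _)
            ((finite_cosetClosedBall _).union (finite_cosetSphere _))).trans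
            (Set.ncard_union_le _ _)
      _ ≤ (cosetClosedBall H m).ncard * ∑ l ∈ Finset.range (i + 1), (2 * Fintype.card α - 1) ^ l
          + (2 * Fintype.card α - 1) ^ (i + 1) * (cosetClosedBall H m).ncard :=
          add_le_add ih hsphere
      _ = _ := by rw [Finset.sum_range_succ _ (i + 1), mul_add, mul_comm _ (_ ^ _)]

end FreeGroup

theorem div_mul_pow_le_of_le_mul_geom_sum {Q b c : ℝ} (hQ : 1 < Q) (hb : 0 ≤ b) {m k : ℕ}
    (h : c * Q ^ (m + k) ≤ b * ∑ l ∈ Finset.range (k + 1), Q ^ l) :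
    (Q - 1) / Q * c * Q ^ m ≤ b := by
  have hgeom : (∑ l ∈ Finset.range (k + 1), Q ^ l) * (Q - 1) ≤ Q ^ (k + 1) := by
    rw [geom_sum_mul]; linarith
  calc (Q - 1) / Q * c * Q ^ m = c * Q ^ (m + k) * (Q - 1) / Q ^ (k + 1) := by
        field_simp; ring
    _ ≤ b * Q ^ (k + 1) / Q ^ (k + 1) := by
        gcongr ?_ / _
        calc c * Q ^ (m + k) * (Q - 1) ≤ (b * ∑ l ∈ Finset.range (k + 1), Q ^ l) * (Q - 1) := by
              gcongr
          _ ≤ b * Q ^ (k + 1) := by rw [mul_assoc]; gcongr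
    _ = b := by field_simp

theorem cosetBall_eq_cosetClosedBall {r : ℕ} (H : Subgroup (FreeGroup (Fin r))) (n : ℕ) :
    cosetBall H n = FreeGroup.cosetClosedBall H n := by
  ext x
  constructor
  · rintro ⟨g, hg, rfl⟩
    exact (FreeGroup.cosetNorm_mk_le g).trans hg
  · intro hx
    obtain ⟨g, rfl, hg⟩ := FreeGroup.exists_norm_eq_cosetNorm x
    exact ⟨g, hg.trans_le hx, rfl⟩

theorem ball_lower_bound_propagates_general (r : ℕ) (hr : 1 < r)
    (H : Subgroup (FreeGroup (Fin r))) (c : ℝ) (n : ℕ)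
    (hball : c * (2 * (r : ℝ) - 1) ^ n ≤ ((cosetBall H n).ncard : ℝ)) :
    ∀ m : ℕ, 0 < m → m < n →
      (2 * (r : ℝ) - 2) / (2 * (r : ℝ) - 1) * c * (2 * (r : ℝ) - 1) ^ m
        ≤ ((cosetBall H m).ncard : ℝ) := by
  intro m hm hmn
  obtain ⟨k, rfl⟩ : ∃ k, n = m + k := ⟨n - m, by omega⟩
  have hQ : ((2 * Fintype.card (Fin r) - 1 : ℕ) : ℝ) = 2 * r - 1 := by
    rw [Fintype.card_fin, Nat.cast_sub (by omega)]
    push_cast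
    ring
  have hcount := FreeGroup.ncard_cosetClosedBall_add_le (H := H) hm k
  rw [← cosetBall_eq_cosetClosedBall, ← cosetBall_eq_cosetClosedBall] at hcount
  have hQ₁ : (1 : ℝ) < 2 * r - 1 := by
    have : (2 : ℝ) ≤ r := by exact_mod_cast hr
    linarith
  convert div_mul_pow_le_of_le_mul_geom_sum hQ₁ (Nat.cast_nonneg _) <| hball.trans <| by
    rw [← hQ]; exact_mod_cast hcount using 3
  ring

/-- In the Cayley graph of the action of the free group of rank `r > 1` on `F/H`, a lower
bound `#B(n) ≥ c(2r-1)ⁿ` on one ball propagates down to all smaller radii: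
`#B(m) ≥ ((2r-2)/(2r-1))·c·(2r-1)^m` for all `0 < m < n`. -/
theorem ball_lower_bound_propagates (r : ℕ) (hr : 1 < r)
    (H : Subgroup (FreeGroup (Fin r))) (c : ℝ) (hc : 0 < c) (n : ℕ) (hn : 0 < n)
    (hball : c * (2 * (r : ℝ) - 1) ^ n ≤ ((cosetBall H n).ncard : ℝ)) :
    ∀ m : ℕ, 0 < m → m < n →
      (2 * (r : ℝ) - 2) / (2 * (r : ℝ) - 1) * c * (2 * (r : ℝ) - 1) ^ m
        ≤ ((cosetBall H m).ncard : ℝ) :=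
  ball_lower_bound_propagates_general r hr H c n hball
end

section
/- Let R be the free associative algebra Φ⟨x₁,...,x_r⟩, r > 1. For j = 1,...,r fix sequences (α_{ji})_{i≥1} of scalars, and for each monomial v = x_{j₁}···x_{j_d} define the quasi-monomial e_v = (x_{j₁} - α_{j₁,1})···(x_{j_d} - α_{j_d,d}). Let Δ_i be the two-sided ideal generated by x₁ - α_{1i}, ..., x_r - α_{ri}. Then: (a) the quasi-monomials e_v (over all monomials v, including e_1 = 1) form a linear basis of R; (b) e_v · x_j = e_{v x_j} + α_{j, d+1}·e_v where d = deg v; (c) the quasi-monomials e_v with deg v ≥ m form a linear basis of the product Δ₁Δ₂···Δ_m. -/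
/-!
The coefficient of `e_v` at a word `w` with `|w| ≥ |v|` is `1` if `w = v` and `0` otherwise,
since `e_v` is `v` plus words of lower degree; this triangularity gives linear independence.
By (b), the span `E_m` of the `e_v` with `|v| ≥ m` is a right ideal and
`E_k (x_j - α_{j,k+1}) ⊆ E_{k+1}`; as `1 = e_∅`, `E_0` is everything and
`E_m Δ_{m+1} ⊆ E_{m+1}`.
Conversely, splitting `v` after its first `m` letters writes `e_v` for `|v| > m` as an element of
`E_m Δ_{m+1}`, so `Δ₁⋯Δ_m = E_m` by induction on `m`.
-/

noncomputable section

/-- The quasi-monomial `e_v = (x_{j₁} - α_{j₁,1})⋯(x_{j_d} - α_{j_d,d})` associated to the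
monomial `v = x_{j₁}⋯x_{j_d}` and the scalar sequences `α`. -/
def quasiMonomial {Φ : Type*} [Field Φ] {r : ℕ} (α : Fin r → ℕ → Φ)
    (v : List (Fin r)) : FreeAlgebra Φ (Fin r) :=
  (v.zipIdx.map (fun p =>
    FreeAlgebra.ι Φ p.1 - algebraMap Φ (FreeAlgebra Φ (Fin r)) (α p.1 (p.2 + 1)))).prod

/-- The two-sided ideal `Δ_i` generated by `x₁ - α_{1i}, …, x_r - α_{ri}`, as a
`Φ`-submodule of the free associative algebra. -/
def shiftIdeal {Φ : Type*} [Field Φ] {r : ℕ} (α : Fin r → ℕ → Φ) (i : ℕ) :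
    Submodule Φ (FreeAlgebra Φ (Fin r)) :=
  Submodule.span Φ
    {x | ∃ (a b : FreeAlgebra Φ (Fin r)) (j : Fin r),
      x = a * (FreeAlgebra.ι Φ j - algebraMap Φ (FreeAlgebra Φ (Fin r)) (α j i)) * b}

open FreeAlgebra Module

theorem LinearIndependent.of_triangular_dual_eq_zero_one {R M ι β : Type*} [CommRing R]
    [AddCommGroup M] [Module R M] [LinearOrder β] (v : ι → M) (f : ι → Dual R M)
    (deg : ι → β) (h0 : ∀ i j, i ≠ j → deg j ≤ deg i → f i (v j) = 0)
    (h1 : ∀ i, f i (v i) = 1) :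
    LinearIndependent R v := by
  classical
  refine linearIndependent_iff'.mpr fun s g hrel => ?_
  by_contra! hne
  obtain ⟨i, hi, hmax⟩ := (s.filter (g · ≠ 0)).exists_max_image deg
    (by simpa [Finset.filter_nonempty_iff] using hne)
  rw [Finset.mem_filter] at hi
  have hterm (j : ι) (hjs : j ∈ s) (hji : j ≠ i) : g j * f i (v j) = 0 := by
    by_cases hgj : g j = 0
    · rw [hgj, zero_mul]
    · rw [h0 i j hji.symm (hmax j (Finset.mem_filter.mpr ⟨hjs, hgj⟩)), mul_zero]
  apply hi.2
  simpa [s.sum_eq_single i hterm (absurd hi.1), h1 i] using congr_arg (f i) hrel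

namespace FreeAlgebra

variable {R X : Type*} [CommRing R]

lemma coord_basisFreeMonoid_one (w : List X) :
    (basisFreeMonoid R X).coord (FreeMonoid.ofList w) 1 = if [] = w then 1 else 0 := by
  classical
  change (equivMonoidAlgebraFreeMonoid (1 : FreeAlgebra R X)).coeff _ = _
  rw [map_one, MonoidAlgebra.one_def, MonoidAlgebra.coeff_single, Finsupp.single_apply,
    ← FreeMonoid.ofList_nil, FreeMonoid.ofList.injective.eq_iff]
  congr

lemma coord_basisFreeMonoid_mul_ι [DecidableEq X] (y : FreeAlgebra R X) (u : List X)
    (j j' : X) :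
    (basisFreeMonoid R X).coord (FreeMonoid.ofList (u ++ [j'])) (y * ι R j)
      = if j = j' then (basisFreeMonoid R X).coord (FreeMonoid.ofList u) y else 0 := by
  change (equivMonoidAlgebraFreeMonoid (y * ι R j)).coeff _ = _
  have hι : equivMonoidAlgebraFreeMonoid (ι R j) = MonoidAlgebra.single (FreeMonoid.of j) 1 := by
    simp [equivMonoidAlgebraFreeMonoid]
  rw [map_mul, hι]
  split_ifs with hj
  · subst hj
    rw [MonoidAlgebra.coeff_mul_single_eq_coeff_mul (FreeMonoid.ofList u), mul_one]
    · rfl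
    · intro m _
      rw [FreeMonoid.ofList_append, FreeMonoid.ofList_singleton, mul_left_inj]
  · refine MonoidAlgebra.coeff_mul_single_of_forall_mul_ne _ _ fun d hd => hj ?_
    exact List.singleton_inj.mp (List.append_inj' (congr_arg FreeMonoid.toList hd) rfl).2

end FreeAlgebra

section QuasiMonomials

variable {Φ : Type*} [Field Φ] {r : ℕ} (α : Fin r → ℕ → Φ)

/-- The factors that the letters of `v` contribute to `e_{u v}` when `u` has length `k`. -/
def quasiMonomialFrom (k : ℕ) (v : List (Fin r)) : FreeAlgebra Φ (Fin r) :=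
  ((v.zipIdx k).map (fun p =>
    ι Φ p.1 - algebraMap Φ (FreeAlgebra Φ (Fin r)) (α p.1 (p.2 + 1)))).prod

lemma quasiMonomialFrom_zero (v : List (Fin r)) : quasiMonomialFrom α 0 v = quasiMonomial α v :=
  rfl

lemma quasiMonomialFrom_append (k : ℕ) (u v : List (Fin r)) :
    quasiMonomialFrom α k (u ++ v) =
      quasiMonomialFrom α k u * quasiMonomialFrom α (k + u.length) v := by
  rw [quasiMonomialFrom, List.zipIdx_append, List.map_append, List.prod_append]
  rfl

lemma quasiMonomialFrom_cons (k : ℕ) (j : Fin r) (v : List (Fin r)) :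
    quasiMonomialFrom α k (j :: v) =
      (ι Φ j - algebraMap Φ _ (α j (k + 1))) * quasiMonomialFrom α (k + 1) v := by
  rw [quasiMonomialFrom, List.zipIdx_cons, List.map_cons, List.prod_cons]
  rfl

lemma quasiMonomialFrom_nil (k : ℕ) : quasiMonomialFrom α k [] = 1 :=
  rfl

lemma quasiMonomial_nil : quasiMonomial α ([] : List (Fin r)) = 1 :=
  rfl

lemma quasiMonomial_append_singleton (v : List (Fin r)) (j : Fin r) :
    quasiMonomial α (v ++ [j]) =
      quasiMonomial α v * (ι Φ j - algebraMap Φ _ (α j (v.length + 1))) := by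
  rw [← quasiMonomialFrom_zero, quasiMonomialFrom_append, quasiMonomialFrom_cons,
    quasiMonomialFrom_nil, mul_one, zero_add, quasiMonomialFrom_zero]

lemma quasiMonomial_eq_mul_quasiMonomialFrom {m : ℕ} {v : List (Fin r)} (h : m ≤ v.length) :
    quasiMonomial α v = quasiMonomial α (v.take m) * quasiMonomialFrom α m (v.drop m) := by
  conv_lhs => rw [← v.take_append_drop m]
  rw [← quasiMonomialFrom_zero, quasiMonomialFrom_append, List.length_take_of_le h, zero_add]
  rfl

lemma quasiMonomial_mul_ι (v : List (Fin r)) (j : Fin r) :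
    quasiMonomial α v * ι Φ j =
      quasiMonomial α (v ++ [j]) + α j (v.length + 1) • quasiMonomial α v := by
  rw [quasiMonomial_append_singleton, mul_sub, ← Algebra.commutes, ← Algebra.smul_def]
  abel

lemma quasiMonomial_mul_sub_algebraMap (v : List (Fin r)) (j : Fin r) (c : Φ) :
    quasiMonomial α v * (ι Φ j - algebraMap Φ _ c)
      = quasiMonomial α (v ++ [j]) + (α j (v.length + 1) - c) • quasiMonomial α v := by
  rw [mul_sub, quasiMonomial_mul_ι, ← Algebra.commutes, ← Algebra.smul_def, sub_smul]
  abel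

lemma coord_quasiMonomial {v w : List (Fin r)} (h : v.length ≤ w.length) :
    (basisFreeMonoid Φ (Fin r)).coord (FreeMonoid.ofList w) (quasiMonomial α v)
      = if v = w then 1 else 0 := by
  induction v using List.reverseRecOn generalizing w with
  | nil => exact coord_basisFreeMonoid_one w
  | append_singleton v j ih =>
    obtain rfl | ⟨u, j', rfl⟩ := w.eq_nil_or_concat
    · simp at h
    have hu : v.length ≤ u.length := by simpa using h
    have hvw : (basisFreeMonoid Φ (Fin r)).coord (FreeMonoid.ofList (u ++ [j']))
        (quasiMonomial α v) = 0 := by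
      rw [ih (hu.trans (by simp)), if_neg]
      rintro rfl
      simp at h
    rw [List.concat_eq_append, quasiMonomial_append_singleton, mul_sub, ← Algebra.commutes,
      ← Algebra.smul_def, map_sub, map_smul, hvw, smul_zero, sub_zero,
      coord_basisFreeMonoid_mul_ι, ih hu]
    by_cases hj : j = j' <;> simp [hj]

theorem linearIndependent_quasiMonomial :
    LinearIndependent Φ (quasiMonomial α) :=
  .of_triangular_dual_eq_zero_one _
    (fun w => (basisFreeMonoid Φ (Fin r)).coord (FreeMonoid.ofList w)) List.length
    (fun w v hwv hvw => by rw [coord_quasiMonomial α hvw, if_neg hwv.symm])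
    (fun v => by rw [coord_quasiMonomial α le_rfl, if_pos rfl])

def quasiMonomialSpan (m : ℕ) : Submodule Φ (FreeAlgebra Φ (Fin r)) :=
  Submodule.span Φ {x | ∃ v : List (Fin r), m ≤ v.length ∧ x = quasiMonomial α v}

lemma quasiMonomial_mem_quasiMonomialSpan {m : ℕ} {v : List (Fin r)} (h : m ≤ v.length) :
    quasiMonomial α v ∈ quasiMonomialSpan α m :=
  Submodule.subset_span ⟨v, h, rfl⟩

lemma mul_mem_quasiMonomialSpan {m : ℕ} {y : FreeAlgebra Φ (Fin r)}
    (hy : y ∈ quasiMonomialSpan α m) (a : FreeAlgebra Φ (Fin r)) :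
    y * a ∈ quasiMonomialSpan α m := by
  induction a using FreeAlgebra.induction generalizing y with
  | grade0 c =>
    rw [← Algebra.commutes, ← Algebra.smul_def]
    exact Submodule.smul_mem _ c hy
  | grade1 j =>
    suffices quasiMonomialSpan α m ≤
        (quasiMonomialSpan α m).comap (LinearMap.mulRight Φ (ι Φ j)) from this hy
    rw [quasiMonomialSpan, Submodule.span_le]
    rintro _ ⟨v, hv, rfl⟩
    rw [SetLike.mem_coe, Submodule.mem_comap, LinearMap.mulRight_apply, quasiMonomial_mul_ι]
    exact add_mem (quasiMonomial_mem_quasiMonomialSpan α (by simpa using hv.trans (by omega)))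
      (Submodule.smul_mem _ _ (quasiMonomial_mem_quasiMonomialSpan α hv))
  | mul a b iha ihb => rw [← mul_assoc]; exact ihb (iha hy)
  | add a b iha ihb => rw [mul_add]; exact add_mem (iha hy) (ihb hy)

lemma quasiMonomialSpan_zero : quasiMonomialSpan α 0 = ⊤ := by
  refine eq_top_iff.mpr fun x _ => one_mul x ▸ mul_mem_quasiMonomialSpan α ?_ x
  exact quasiMonomial_nil α ▸ quasiMonomial_mem_quasiMonomialSpan α (Nat.zero_le _)

lemma span_range_quasiMonomial : Submodule.span Φ (Set.range (quasiMonomial α)) = ⊤ := by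
  rw [← quasiMonomialSpan_zero α, quasiMonomialSpan]
  congr
  ext x
  simp only [Set.mem_range, Set.mem_ofPred_eq, zero_le, true_and, eq_comm]

lemma mul_sub_algebraMap_mem_quasiMonomialSpan_succ {k : ℕ} {y : FreeAlgebra Φ (Fin r)}
    (hy : y ∈ quasiMonomialSpan α k) (j : Fin r) :
    y * (ι Φ j - algebraMap Φ _ (α j (k + 1))) ∈ quasiMonomialSpan α (k + 1) := by
  suffices quasiMonomialSpan α k ≤ (quasiMonomialSpan α (k + 1)).comap
      (LinearMap.mulRight Φ (ι Φ j - algebraMap Φ _ (α j (k + 1)))) from this hy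
  rw [quasiMonomialSpan, Submodule.span_le]
  rintro _ ⟨v, hv, rfl⟩
  rw [SetLike.mem_coe, Submodule.mem_comap, LinearMap.mulRight_apply,
    quasiMonomial_mul_sub_algebraMap]
  refine add_mem (quasiMonomial_mem_quasiMonomialSpan α (by simpa using hv)) ?_
  rcases hv.eq_or_lt with rfl | hlt
  · rw [sub_self, zero_smul]
    exact zero_mem _
  · exact Submodule.smul_mem _ _ (quasiMonomial_mem_quasiMonomialSpan α hlt)

lemma quasiMonomialFrom_cons_mem_shiftIdeal (k : ℕ) (j : Fin r) (v : List (Fin r)) :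
    quasiMonomialFrom α k (j :: v) ∈ shiftIdeal α (k + 1) :=
  Submodule.subset_span ⟨1, _, j, by rw [one_mul, quasiMonomialFrom_cons]⟩

lemma quasiMonomialSpan_mul_shiftIdeal (m : ℕ) :
    quasiMonomialSpan α m * shiftIdeal α (m + 1) = quasiMonomialSpan α (m + 1) := by
  apply le_antisymm
  · refine Submodule.mul_le.mpr fun y hy z hz => ?_
    suffices shiftIdeal α (m + 1) ≤
        (quasiMonomialSpan α (m + 1)).comap (LinearMap.mulLeft Φ y) from this hz
    rw [shiftIdeal, Submodule.span_le]
    rintro _ ⟨a, b, j, rfl⟩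
    rw [SetLike.mem_coe, Submodule.mem_comap, LinearMap.mulLeft_apply, ← mul_assoc, ← mul_assoc]
    exact mul_mem_quasiMonomialSpan α (mul_sub_algebraMap_mem_quasiMonomialSpan_succ α
      (mul_mem_quasiMonomialSpan α hy a) j) b
  · rw [quasiMonomialSpan, Submodule.span_le]
    rintro _ ⟨v, hv, rfl⟩
    obtain ⟨j, w, hjw⟩ :=
      List.exists_cons_of_length_pos (l := v.drop m) (by rw [List.length_drop]; omega)
    rw [SetLike.mem_coe, quasiMonomial_eq_mul_quasiMonomialFrom α (m := m) (by omega), hjw]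
    exact Submodule.mul_mem_mul
      (quasiMonomial_mem_quasiMonomialSpan α (by rw [List.length_take]; omega))
      (quasiMonomialFrom_cons_mem_shiftIdeal α m j w)

lemma shiftIdeal_one : shiftIdeal α 1 = quasiMonomialSpan α 1 := by
  apply le_antisymm
  · rw [← quasiMonomialSpan_mul_shiftIdeal, zero_add]
    exact fun x hx => one_mul x ▸ Submodule.mul_mem_mul (by simp [quasiMonomialSpan_zero]) hx
  · rw [quasiMonomialSpan, Submodule.span_le]
    rintro _ ⟨v, hv, rfl⟩
    obtain ⟨j, w, rfl⟩ := List.exists_cons_of_length_pos hv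
    exact quasiMonomialFrom_cons_mem_shiftIdeal α 0 j w

lemma prod_shiftIdeal {m : ℕ} (hm : 1 ≤ m) :
    ((List.range m).map (fun i => shiftIdeal α (i + 1))).prod = quasiMonomialSpan α m := by
  induction m, hm using Nat.le_induction with
  | base => simp [shiftIdeal_one]
  | succ m _ ih =>
    rw [List.range_succ, List.map_append, List.prod_append, ih, List.map_singleton,
      List.prod_singleton, quasiMonomialSpan_mul_shiftIdeal]

end QuasiMonomials

theorem quasiMonomial_basis_and_product_general (Φ : Type*) [Field Φ] (r : ℕ)
    (α : Fin r → ℕ → Φ) :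
    (LinearIndependent Φ (fun v : List (Fin r) => quasiMonomial α v) ∧
      Submodule.span Φ (Set.range (fun v : List (Fin r) => quasiMonomial α v)) = ⊤) ∧
    (∀ (v : List (Fin r)) (j : Fin r),
      quasiMonomial α v * FreeAlgebra.ι Φ j
        = quasiMonomial α (v ++ [j]) + α j (v.length + 1) • quasiMonomial α v) ∧
    (∀ m : ℕ, 1 ≤ m →
      ((List.range m).map (fun i => shiftIdeal α (i + 1))).prod
        = Submodule.span Φ
            {x | ∃ v : List (Fin r), m ≤ v.length ∧ x = quasiMonomial α v}) :=
  ⟨⟨linearIndependent_quasiMonomial α, span_range_quasiMonomial α⟩, quasiMonomial_mul_ι α,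
    fun _ hm => prod_shiftIdeal α hm⟩

/-- (a) The quasi-monomials `e_v` form a linear basis of the free associative algebra;
(b) `e_v·x_j = e_{v x_j} + α_{j,d+1}·e_v` where `d = deg v`;
(c) the quasi-monomials `e_v` with `deg v ≥ m` span the product `Δ₁Δ₂⋯Δ_m`
(hence, being linearly independent by (a), form a basis of it). -/
theorem quasiMonomial_basis_and_product (Φ : Type*) [Field Φ] (r : ℕ) (hr : 1 < r)
    (α : Fin r → ℕ → Φ) :
    (LinearIndependent Φ (fun v : List (Fin r) => quasiMonomial α v) ∧
      Submodule.span Φ (Set.range (fun v : List (Fin r) => quasiMonomial α v)) = ⊤) ∧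
    (∀ (v : List (Fin r)) (j : Fin r),
      quasiMonomial α v * FreeAlgebra.ι Φ j
        = quasiMonomial α (v ++ [j]) + α j (v.length + 1) • quasiMonomial α v) ∧
    (∀ m : ℕ, 1 ≤ m →
      ((List.range m).map (fun i => shiftIdeal α (i + 1))).prod
        = Submodule.span Φ
            {x | ∃ v : List (Fin r), m ≤ v.length ∧ x = quasiMonomial α v}) :=
  quasiMonomial_basis_and_product_general Φ r α
end
end
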